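/- Let A be a nonempty finite set of candidate action sequences, and assume for each a ∈ A a joint pmf p_a over random variables Xin, Xnot, x₁, …, x_T, Z₁, …, Z_T taking values in fixed nonempty finite types. Write X₀ := (Xin, Xnot), X_t := (X₀, x₁, …, x_t), and suppose that under every p_a and for every 1 ≤ t ≤ T: (i) Z_{1:t} and Xnot are conditionally independent given (Xin, x₁, …, x_t), and (ii) (x₁, …, x_t) and Xnot are conditionally independent given Xin. Define the full objective J(a) := ∑_{t=1}^{T} [H_{p_a}(X₀) − H_{p_a}(X_t ∣ Z_{1:t})] and the involved objective J^in(a) := ∑_{t=1}^{T} [H_{p_a}(Xin) − H_{p_a}((Xin, x₁, …, x_t) ∣ Z_{1:t})]. Then J(a) = J^in(a) for every a ∈ A; consequently the two objectives have the same maximal value and the same set of maximizing action sequences. (The content of Theorem 3: replacing the full-state augmented information-gain reward by its involved counterpart yields an equivalent optimization problem.) -/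
import Mathlib


open Real

/-- `p` is a probability mass function on the finite type `Ω`. -/
def IsPmf {Ω : Type*} [Fintype Ω] (p : Ω → ℝ) : Prop :=
  (∀ ω, 0 ≤ p ω) ∧ ∑ ω, p ω = 1

/-- Shannon entropy of a pmf `q` on a finite type, with the convention `0 · log 0 = 0`. -/
noncomputable def entFun {S : Type*} [Fintype S] (q : S → ℝ) : ℝ :=
  ∑ s, Real.negMulLog (q s)

/-- The (marginal) distribution of the random variable `f : Ω → S` under `p`. -/
noncomputable def distOf {Ω S : Type*} [Fintype Ω] [Fintype S] [DecidableEq S]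
    (p : Ω → ℝ) (f : Ω → S) : S → ℝ :=
  fun s => ∑ ω, if f ω = s then p ω else 0

/-- Entropy `H(f)` of a (jointly distributed) random variable: the entropy of its marginal. -/
noncomputable def entOf {Ω S : Type*} [Fintype Ω] [Fintype S] [DecidableEq S]
    (p : Ω → ℝ) (f : Ω → S) : ℝ :=
  entFun (distOf p f)

/-- Conditional pmf of `f` given `g = t` :  `s ↦ p(f = s, g = t) / p(g = t)`. -/
noncomputable def condPmf {Ω S T : Type*} [Fintype Ω] [Fintype S] [DecidableEq S]
    [Fintype T] [DecidableEq T] (p : Ω → ℝ) (f : Ω → S) (g : Ω → T) (t : T) : S → ℝ :=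
  fun s => distOf p (fun ω => (f ω, g ω)) (s, t) / distOf p g t

/-- Conditional entropy `H(f ∣ g) = ∑ₜ p(g = t) · H(f ∣ g = t)`. -/
noncomputable def condEntOf {Ω S T : Type*} [Fintype Ω] [Fintype S] [DecidableEq S]
    [Fintype T] [DecidableEq T] (p : Ω → ℝ) (f : Ω → S) (g : Ω → T) : ℝ :=
  ∑ t, distOf p g t * entFun (condPmf p f g t)

/-- Mutual information `I(f;g) = H(f) − H(f ∣ g)`. -/
noncomputable def miOf {Ω S T : Type*} [Fintype Ω] [Fintype S] [DecidableEq S]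
    [Fintype T] [DecidableEq T] (p : Ω → ℝ) (f : Ω → S) (g : Ω → T) : ℝ :=
  entOf p f - condEntOf p f g

/-- Augmented mutual information `Iaug(X; X⁺; Z) = H(X) − H((X,X⁺) ∣ Z)`. -/
noncomputable def miAug {Ω S S' T : Type*} [Fintype Ω] [Fintype S] [DecidableEq S]
    [Fintype S'] [DecidableEq S'] [Fintype T] [DecidableEq T]
    (p : Ω → ℝ) (X : Ω → S) (Xp : Ω → S') (Z : Ω → T) : ℝ :=
  entOf p X - condEntOf p (fun ω => (X ω, Xp ω)) Z

/-- `f` and `g` are conditionally independent given `h` under the joint pmf `p`: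
`p(f = s, g = t ∣ h = u) = p(f = s ∣ h = u) · p(g = t ∣ h = u)` for every `u` with
positive probability. -/
def CondIndep {Ω S T U : Type*} [Fintype Ω] [Fintype S] [DecidableEq S]
    [Fintype T] [DecidableEq T] [Fintype U] [DecidableEq U]
    (p : Ω → ℝ) (f : Ω → S) (g : Ω → T) (h : Ω → U) : Prop :=
  ∀ u : U, 0 < distOf p h u → ∀ (s : S) (t : T),
    condPmf p (fun ω => (f ω, g ω)) h u (s, t) =
      condPmf p f h u s * condPmf p g h u t

section Planning

variable {T : ℕ} {Xin Xnot : Type*} {Xs Zs : ℕ → Type*}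

/-- Sample space: involved prior `Xin`, uninvolved prior `Xnot`, augmented states
`x₁, …, x_T` and observations `Z₁, …, Z_T`. -/
abbrev PTraj (T : ℕ) (Xin Xnot : Type*) (Xs Zs : ℕ → Type*) : Type _ :=
  Xin × Xnot × ((i : Fin T) → Xs i.val) × ((i : Fin T) → Zs i.val)

/-- The augmented states up to time `t`, `(x₁, …, x_t)`. -/
def xseg (t : ℕ) (ht : t ≤ T) (ω : PTraj T Xin Xnot Xs Zs) : (j : Fin t) → Xs j.val :=
  fun j => ω.2.2.1 ⟨j.val, lt_of_lt_of_le j.isLt ht⟩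

/-- The observations up to time `t`, `Z_{1:t} = (Z₁, …, Z_t)`. -/
def zseg (t : ℕ) (ht : t ≤ T) (ω : PTraj T Xin Xnot Xs Zs) : (j : Fin t) → Zs j.val :=
  fun j => ω.2.2.2 ⟨j.val, lt_of_lt_of_le j.isLt ht⟩

end Planning

section Helpers

variable {Ω S S' T U : Type*} [Fintype Ω] [Fintype S] [DecidableEq S]
  [Fintype S'] [DecidableEq S'] [Fintype T] [DecidableEq T] [Fintype U] [DecidableEq U]

lemma distOf_nonneg (p : Ω → ℝ) (hp : ∀ ω, 0 ≤ p ω) (f : Ω → S) (s : S) :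
    0 ≤ distOf p f s :=
  Finset.sum_nonneg fun ω _ => by
    split
    · exact hp ω
    · exact le_refl 0

lemma distOf_congr (p : Ω → ℝ) (f : Ω → S) (g : Ω → T) (s : S) (t : T)
    (h : ∀ ω, f ω = s ↔ g ω = t) :
    distOf p f s = distOf p g t :=
  Finset.sum_congr rfl fun ω _ => by rw [if_congr (h ω) rfl rfl]

lemma distOf_marg (p : Ω → ℝ) (f : Ω → S) (g : Ω → T) (s : S) :
    distOf p f s = ∑ t, distOf p (fun ω => (f ω, g ω)) (s, t) := by
  unfold distOf
  rw [Finset.sum_comm]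
  refine Finset.sum_congr rfl fun ω _ => ?_
  simp [Prod.ext_iff, ite_and, Finset.sum_ite_eq]

lemma distOf_marg' (p : Ω → ℝ) (f : Ω → S) (g : Ω → T) (t : T) :
    distOf p g t = ∑ s, distOf p (fun ω => (f ω, g ω)) (s, t) := by
  rw [distOf_marg p g f t]
  exact Fintype.sum_congr _ _ fun s =>
    distOf_congr p _ _ _ _ fun ω => by simp [Prod.ext_iff, and_comm]

lemma negMulLog_sum_eq (q : T → ℝ) (hq : ∀ t, 0 ≤ q t) :
    ∑ t, Real.negMulLog (q t)
      = Real.negMulLog (∑ t, q t)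
        + (∑ t, q t) * ∑ t, Real.negMulLog (q t / ∑ t, q t) := by
  rcases eq_or_lt_of_le (Finset.sum_nonneg fun t (_ : t ∈ Finset.univ) => hq t) with h0 | h0
  · have hz : ∀ t ∈ Finset.univ, q t = 0 :=
      (Finset.sum_eq_zero_iff_of_nonneg (fun t _ => hq t)).1 h0.symm
    have hz' : ∀ t ∈ (Finset.univ : Finset T), Real.negMulLog (q t) = 0 := by
      intro t ht; rw [hz t ht]; simp
    rw [Finset.sum_congr rfl hz', ← h0]
    simp
  · have hcne : (∑ t, q t) ≠ 0 := ne_of_gt h0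
    have key : ∀ t ∈ (Finset.univ : Finset T), Real.negMulLog (q t)
        = (q t / ∑ t, q t) * Real.negMulLog (∑ t, q t)
          + (∑ t, q t) * Real.negMulLog (q t / ∑ t, q t) := by
      intro t _
      nth_rewrite 1 [show q t = (∑ t, q t) * (q t / ∑ t, q t) by field_simp]
      exact Real.negMulLog_mul _ _
    rw [Finset.sum_congr rfl key, Finset.sum_add_distrib, ← Finset.sum_mul,
        ← Finset.sum_div, div_self hcne, one_mul, ← Finset.mul_sum]

lemma negMulLog_sum_scaled (q : T → ℝ) (hq : ∀ t, 0 ≤ q t) {D : ℝ} (hD : 0 < D) :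
    D * ∑ t, Real.negMulLog (q t / D)
      = D * Real.negMulLog ((∑ t, q t) / D)
        + (∑ t, q t) * ∑ t, Real.negMulLog (q t / ∑ t, q t) := by
  have h := negMulLog_sum_eq (fun t => q t / D) (fun t => div_nonneg (hq t) hD.le)
  simp only [← Finset.sum_div] at h
  have hdd : ∀ t, (q t / D) / ((∑ t, q t) / D) = q t / ∑ t, q t := by
    intro t
    rcases eq_or_ne (∑ t, q t) 0 with hz | hz
    · have hqz : q t = 0 :=
        (Finset.sum_eq_zero_iff_of_nonneg (fun t _ => hq t)).1 hz t (Finset.mem_univ t)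
      simp [hqz]
    · field_simp
  simp only [hdd] at h
  rw [h, mul_add]
  congr 1
  have hDD : D * ((∑ i : T, q i) / D) = ∑ i : T, q i := by field_simp
  rw [← mul_assoc, hDD]

/-- Chain rule: `H(f,g) = H(f) + H(g ∣ f)`. -/
lemma ent_chain (p : Ω → ℝ) (hp : ∀ ω, 0 ≤ p ω) (f : Ω → S) (g : Ω → T) :
    entOf p (fun ω => (f ω, g ω)) = entOf p f + condEntOf p g f := by
  unfold entOf entFun condEntOf condPmf
  rw [Fintype.sum_prod_type, ← Finset.sum_add_distrib]
  refine Finset.sum_congr rfl fun s _ => ?_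
  have hmarg : distOf p f s = ∑ t, distOf p (fun ω => (f ω, g ω)) (s, t) :=
    distOf_marg p f g s
  have h := negMulLog_sum_eq (fun t => distOf p (fun ω => (f ω, g ω)) (s, t))
    (fun t => distOf_nonneg p hp _ _)
  simp only [← hmarg] at h
  rw [h]
  congr 2
  refine Fintype.sum_congr _ _ fun t => ?_
  congr 2
  exact (distOf_congr p _ _ _ _ fun ω => by simp [Prod.ext_iff, and_comm]).symm

/-- Conditional chain rule: `H((f,g) ∣ h) = H(f ∣ h) + H(g ∣ (f,h))`. -/
lemma condEnt_chain (p : Ω → ℝ) (hp : ∀ ω, 0 ≤ p ω) (f : Ω → S) (g : Ω → T) (h : Ω → U) :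
    condEntOf p (fun ω => (f ω, g ω)) h
      = condEntOf p f h + condEntOf p g (fun ω => (f ω, h ω)) := by
  have perU : ∀ u, distOf p h u * entFun (condPmf p (fun ω => (f ω, g ω)) h u)
      = distOf p h u * entFun (condPmf p f h u)
        + ∑ s, distOf p (fun ω => (f ω, h ω)) (s, u)
            * entFun (condPmf p g (fun ω => (f ω, h ω)) (s, u)) := by
    intro u
    have hm : ∀ s, distOf p (fun ω => (f ω, h ω)) (s, u)
        = ∑ t, distOf p (fun ω => ((f ω, g ω), h ω)) ((s, t), u) := by
      intro s
      rw [distOf_marg p (fun ω => (f ω, h ω)) g (s, u)]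
      exact Fintype.sum_congr _ _ fun t =>
        distOf_congr p _ _ _ _ fun ω => by simp only [Prod.ext_iff]; tauto
    have hD : distOf p h u = ∑ s, distOf p (fun ω => (f ω, h ω)) (s, u) :=
      distOf_marg' p f h u
    have hmn : ∀ s, 0 ≤ distOf p (fun ω => (f ω, h ω)) (s, u) :=
      fun s => distOf_nonneg p hp _ _
    rcases eq_or_lt_of_le (distOf_nonneg p hp h u) with h0 | h0
    · have hz : ∀ s, distOf p (fun ω => (f ω, h ω)) (s, u) = 0 := by
        intro s
        exact (Finset.sum_eq_zero_iff_of_nonneg (fun s _ => hmn s)).1 (hD ▸ h0.symm)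
          s (Finset.mem_univ s)
      rw [← h0]
      simp [hz]
    · unfold entFun condPmf
      rw [Fintype.sum_prod_type, Finset.mul_sum]
      have step : ∀ s ∈ (Finset.univ : Finset S),
          distOf p h u * ∑ t, Real.negMulLog
            (distOf p (fun ω => ((f ω, g ω), h ω)) ((s, t), u) / distOf p h u)
          = distOf p h u * Real.negMulLog
              (distOf p (fun ω => (f ω, h ω)) (s, u) / distOf p h u)
            + distOf p (fun ω => (f ω, h ω)) (s, u)
              * ∑ t, Real.negMulLog
                  (distOf p (fun ω => (g ω, (f ω, h ω))) (t, (s, u))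
                    / distOf p (fun ω => (f ω, h ω)) (s, u)) := by
        intro s _
        have h1 := negMulLog_sum_scaled
          (fun t => distOf p (fun ω => ((f ω, g ω), h ω)) ((s, t), u))
          (fun t => distOf_nonneg p hp _ _) h0
        simp only [← hm s] at h1
        rw [h1]
        congr 2
        refine Fintype.sum_congr _ _ fun t => ?_
        congr 2
        exact (distOf_congr p _ _ _ _ fun ω => by simp only [Prod.ext_iff]; tauto).symm
      rw [Finset.sum_congr rfl step, Finset.sum_add_distrib, ← Finset.mul_sum]
  unfold condEntOf
  rw [Finset.sum_congr rfl (fun u _ => perU u), Finset.sum_add_distrib]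
  congr 1
  rw [Fintype.sum_prod_type, Finset.sum_comm]

/-- If `g ⟂ f ∣ h` then `H(f ∣ (h,g)) = H(f ∣ h)`. -/
lemma condEnt_drop (p : Ω → ℝ) (hp : ∀ ω, 0 ≤ p ω) (f : Ω → S) (g : Ω → T) (h : Ω → U)
    (hci : CondIndep p g f h) :
    condEntOf p f (fun ω => (h ω, g ω)) = condEntOf p f h := by
  have hD2 : ∀ u t, distOf p (fun ω => (h ω, g ω)) (u, t)
      = ∑ s, distOf p (fun ω => (f ω, (h ω, g ω))) (s, (u, t)) :=
    fun u t => distOf_marg' p f (fun ω => (h ω, g ω)) (u, t)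
  have hDm : ∀ u, distOf p h u = ∑ t, distOf p (fun ω => (h ω, g ω)) (u, t) :=
    fun u => distOf_marg p h g u
  unfold condEntOf
  rw [Fintype.sum_prod_type]
  refine Finset.sum_congr rfl fun u _ => ?_
  rcases eq_or_lt_of_le (distOf_nonneg p hp h u) with h0 | h0
  · have hz : ∀ t, distOf p (fun ω => (h ω, g ω)) (u, t) = 0 := by
      intro t
      exact (Finset.sum_eq_zero_iff_of_nonneg
        (fun t _ => distOf_nonneg p hp (fun ω => (h ω, g ω)) (u, t))).1
        ((hDm u) ▸ h0.symm) t (Finset.mem_univ t)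
    rw [← h0]
    simp [hz]
  · have hDne : distOf p h u ≠ 0 := ne_of_gt h0
    have key : ∀ t ∈ (Finset.univ : Finset T),
        distOf p (fun ω => (h ω, g ω)) (u, t)
          * entFun (condPmf p f (fun ω => (h ω, g ω)) (u, t))
        = distOf p (fun ω => (h ω, g ω)) (u, t) * entFun (condPmf p f h u) := by
      intro t _
      rcases eq_or_lt_of_le (distOf_nonneg p hp (fun ω => (h ω, g ω)) (u, t)) with hz | hpos
      · rw [← hz, zero_mul, zero_mul]
      · have hnum : ∀ s, distOf p (fun ω => (f ω, (h ω, g ω))) (s, (u, t))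
            = condPmf p g h u t * condPmf p f h u s * distOf p h u := by
          intro s
          have e1 : distOf p (fun ω => (f ω, (h ω, g ω))) (s, (u, t))
              = distOf p (fun ω => ((g ω, f ω), h ω)) ((t, s), u) :=
            distOf_congr p _ _ _ _ fun ω => by simp only [Prod.ext_iff]; tauto
          have e2 := hci u h0 t s
          rw [e1, ← e2]
          unfold condPmf
          have e3 : distOf p (fun ω => ((fun ω => (g ω, f ω)) ω, h ω)) ((t, s), u)
              = distOf p (fun ω => ((g ω, f ω), h ω)) ((t, s), u) := rfl
          rw [e3, div_mul_cancel₀ _ hDne]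
        have hsumcf : ∑ s, condPmf p f h u s = 1 := by
          unfold condPmf
          rw [← Finset.sum_div, ← distOf_marg' p f h u, div_self hDne]
        have hD2eq : distOf p (fun ω => (h ω, g ω)) (u, t)
            = condPmf p g h u t * distOf p h u := by
          rw [hD2 u t, Finset.sum_congr rfl fun s _ => hnum s]
          have : ∀ s ∈ (Finset.univ : Finset S),
              condPmf p g h u t * condPmf p f h u s * distOf p h u
              = (condPmf p g h u t * distOf p h u) * condPmf p f h u s := by
            intro s _; ring
          rw [Finset.sum_congr rfl this, ← Finset.mul_sum, hsumcf, mul_one]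
        have hcgD : condPmf p g h u t * distOf p h u ≠ 0 := by
          rw [← hD2eq]; exact ne_of_gt hpos
        congr 1
        unfold entFun
        refine Fintype.sum_congr _ _ fun s => ?_
        congr 1
        show distOf p (fun ω => (f ω, (h ω, g ω))) (s, (u, t))
            / distOf p (fun ω => (h ω, g ω)) (u, t) = condPmf p f h u s
        rw [hnum s, hD2eq,
          show condPmf p g h u t * condPmf p f h u s * distOf p h u
            = condPmf p f h u s * (condPmf p g h u t * distOf p h u) by ring,
          mul_div_assoc, div_self hcgD, mul_one]
    rw [Finset.sum_congr rfl key, ← Finset.sum_mul, ← hDm u]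

/-- Entropy is invariant under relabeling by a bijection. -/
lemma condEnt_relabel (p : Ω → ℝ) (f : Ω → S) (e : S ≃ S') (h : Ω → U) :
    condEntOf p (fun ω => e (f ω)) h = condEntOf p f h := by
  unfold condEntOf
  refine Finset.sum_congr rfl fun u _ => ?_
  congr 1
  unfold entFun
  refine (Fintype.sum_equiv e _ _ fun s => ?_).symm
  congr 1
  unfold condPmf
  congr 1
  exact (distOf_congr p _ _ _ _ fun ω => by
    simp [Prod.ext_iff, e.apply_eq_iff_eq]).symm

/-- The per-step identity. -/
lemma per_step {Ω A B X Zt : Type*} [Fintype Ω] [Fintype A] [DecidableEq A]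
    [Fintype B] [DecidableEq B] [Fintype X] [DecidableEq X]
    [Fintype Zt] [DecidableEq Zt]
    (p : Ω → ℝ) (hp : ∀ ω, 0 ≤ p ω) (I : Ω → A) (N : Ω → B) (x : Ω → X) (Z : Ω → Zt)
    (hZ : CondIndep p Z N (fun ω => (I ω, x ω)))
    (hX : CondIndep p x N I) :
    entOf p (fun ω => (I ω, N ω))
      - condEntOf p (fun ω => ((I ω, N ω), x ω)) Z
    = entOf p I - condEntOf p (fun ω => (I ω, x ω)) Z := by
  have h1 : entOf p (fun ω => (I ω, N ω)) = entOf p I + condEntOf p N I :=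
    ent_chain p hp I N
  have h2 : condEntOf p (fun ω => ((I ω, N ω), x ω)) Z
      = condEntOf p (fun ω => ((I ω, x ω), N ω)) Z :=
    condEnt_relabel p (fun ω => ((I ω, x ω), N ω))
      ⟨fun q => ((q.1.1, q.2), q.1.2), fun q => ((q.1.1, q.2), q.1.2),
        fun q => rfl, fun q => rfl⟩ Z
  have h3 : condEntOf p (fun ω => ((I ω, x ω), N ω)) Z
      = condEntOf p (fun ω => (I ω, x ω)) Z
        + condEntOf p N (fun ω => ((I ω, x ω), Z ω)) :=
    condEnt_chain p hp (fun ω => (I ω, x ω)) N Z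
  have h4 : condEntOf p N (fun ω => ((I ω, x ω), Z ω))
      = condEntOf p N (fun ω => (I ω, x ω)) :=
    condEnt_drop p hp N Z (fun ω => (I ω, x ω)) hZ
  have h5 : condEntOf p N (fun ω => (I ω, x ω)) = condEntOf p N I :=
    condEnt_drop p hp N x I hX
  rw [h1, h2, h3, h4, h5]
  ring

end Helpers


/-- **Theorem 3 (objective equivalence).** If for every action sequence `a` and every
`1 ≤ t ≤ T` (i) `Z_{1:t} ⟂ Xnot ∣ (Xin, x_{1:t})` and (ii) `x_{1:t} ⟂ Xnot ∣ Xin`, then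
the full objective `J(a) = ∑_{t=1}^{T} [H(X₀) − H(X_t ∣ Z_{1:t})]` (with `X₀ = (Xin, Xnot)`,
`X_t = (X₀, x_{1:t})`) equals the involved objective
`J^in(a) = ∑_{t=1}^{T} [H(Xin) − H((Xin, x_{1:t}) ∣ Z_{1:t})]` for every `a`; consequently
the two objectives have the same maximal value and the same set of maximizers. -/
theorem involved_objective_equiv
    {A : Type*} [Fintype A] [DecidableEq A] [Nonempty A]
    {T : ℕ} {Xin Xnot : Type*} {Xs Zs : ℕ → Type*}
    [Fintype Xin] [DecidableEq Xin] [Nonempty Xin]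
    [Fintype Xnot] [DecidableEq Xnot] [Nonempty Xnot]
    [∀ i, Fintype (Xs i)] [∀ i, DecidableEq (Xs i)] [∀ i, Nonempty (Xs i)]
    [∀ i, Fintype (Zs i)] [∀ i, DecidableEq (Zs i)] [∀ i, Nonempty (Zs i)]
    (p : A → PTraj T Xin Xnot Xs Zs → ℝ) (hp : ∀ a, IsPmf (p a))
    (hZ : ∀ (a : A) (t : ℕ), 1 ≤ t → ∀ ht : t ≤ T,
      CondIndep (p a) (zseg t ht) (fun ω => ω.2.1) (fun ω => (ω.1, xseg t ht ω)))
    (hX : ∀ (a : A) (t : ℕ), 1 ≤ t → ∀ ht : t ≤ T,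
      CondIndep (p a) (xseg t ht) (fun ω => ω.2.1) (fun ω => ω.1))
    (J Jin : A → ℝ)
    (hJ : ∀ a, J a = ∑ t : Fin T,
      (entOf (p a) (fun ω => (ω.1, ω.2.1))
        - condEntOf (p a)
            (fun ω => ((ω.1, ω.2.1), xseg (t.val + 1) (by have := t.isLt; omega) ω))
            (zseg (t.val + 1) (by have := t.isLt; omega))))
    (hJin : ∀ a, Jin a = ∑ t : Fin T,
      (entOf (p a) (fun ω => ω.1)
        - condEntOf (p a)
            (fun ω => (ω.1, xseg (t.val + 1) (by have := t.isLt; omega) ω))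
            (zseg (t.val + 1) (by have := t.isLt; omega)))) :
    (∀ a, J a = Jin a)
    ∧ Finset.univ.sup' Finset.univ_nonempty J
        = Finset.univ.sup' Finset.univ_nonempty Jin
    ∧ {a : A | ∀ a', J a' ≤ J a} = {a : A | ∀ a', Jin a' ≤ Jin a} := by
  have key : ∀ a, J a = Jin a := by
    intro a
    rw [hJ a, hJin a]
    refine Finset.sum_congr rfl fun t _ => ?_
    have htT : t.val + 1 ≤ T := t.isLt
    exact per_step (p a) (hp a).1 (fun ω => ω.1) (fun ω => ω.2.1)
      (xseg (t.val + 1) htT) (zseg (t.val + 1) htT)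
      (hZ a (t.val + 1) (Nat.le_add_left 1 t.val) htT)
      (hX a (t.val + 1) (Nat.le_add_left 1 t.val) htT)
  obtain rfl : J = Jin := funext key
  exact ⟨fun a => rfl, rfl, rfl⟩
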